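/- arXiv:1303.3626 — 2 statements merged into one kernel-verified Lean document; each statement's English description precedes it below -/
import Mathlib

section
/- Let `t` be a valid Patricia trie, `π` a position with `subtreeAt t π = some u`, and `u'` any trie. Then `leafLabels (replaceAt t π u') = (leafLabels t \ leafLabels u) ∪ leafLabels u'`. (The leaf-set accounting used throughout the paper's correctness proofs of update operations; it relies on the distinctness of node labels in a valid trie.) -/
inductive PTrie : Type
  | leaf (s : List Bool) : PTrie
  | node (s : List Bool) (l r : PTrie) : PTrie

/-- Label at the root of a trie. -/
def lbl : PTrie → List Bool
  | .leaf s => s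
  | .node s _ _ => s

/-- A trie is valid if for every internal node `node s l r`,
`s ++ [false]` is a prefix of `lbl l` and `s ++ [true]` is a prefix of `lbl r`. -/
def Valid : PTrie → Prop
  | .leaf _ => True
  | .node s l r => ((s ++ [false]) <+: lbl l) ∧ ((s ++ [true]) <+: lbl r) ∧ Valid l ∧ Valid r

/-- Subtree at a position: descend left on `false`, right on `true`. -/
def subtreeAt : PTrie → List Bool → Option PTrie
  | t, [] => some t
  | .leaf _, _ :: _ => none
  | .node _ l r, b :: π => subtreeAt (if b then r else l) π

/-- Set of binary strings appearing at the leaves. -/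
def leafLabels : PTrie → Set (List Bool)
  | .leaf s => {s}
  | .node _ l r => leafLabels l ∪ leafLabels r

/-- Sequential search. -/
def search (v : List Bool) : PTrie → PTrie
  | .leaf s => .leaf s
  | .node s l r =>
    if s <+: v ∧ s ≠ v then
      (if v.getD s.length false then search v r else search v l)
    else .node s l r

/-- Position of the node returned by `search`. -/
def searchPos (v : List Bool) : PTrie → List Bool
  | .leaf _ => []
  | .node s l r =>
    if s <+: v ∧ s ≠ v then
      (if v.getD s.length false then true :: searchPos v r else false :: searchPos v l)
    else []

/-- Replace the subtree at a position. -/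
def replaceAt : PTrie → List Bool → PTrie → PTrie
  | _, [], u => u
  | .leaf s, _ :: _, _ => .leaf s
  | .node s l r, b :: π, u =>
    if b then .node s l (replaceAt r π u) else .node s (replaceAt l π u) r

/-- Longest common prefix of two binary strings. -/
def lcp : List Bool → List Bool → List Bool
  | a :: as, b :: bs => if a = b then a :: lcp as bs else []
  | _, _ => []

/-- Join two tries under a new internal node labelled by the
longest common prefix of their labels. -/
def join (t₁ t₂ : PTrie) : PTrie :=
  if (lbl t₁).getD (lcp (lbl t₁) (lbl t₂)).length true then
    .node (lcp (lbl t₁) (lbl t₂)) t₂ t₁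
  else
    .node (lcp (lbl t₁) (lbl t₂)) t₁ t₂

/-- Sequential insert. -/
def insertT (v : List Bool) : PTrie → PTrie
  | .node s l r =>
    if s <+: v ∧ s ≠ v then
      (if v.getD s.length false then .node s l (insertT v r) else .node s (insertT v l) r)
    else join (.node s l r) (.leaf v)
  | .leaf s => join (.leaf s) (.leaf v)

/-! In a valid trie every leaf below a node extends its label, so the leaves of the two subtrees
of a node extend `s ++ [false]` and `s ++ [true]` respectively and are disjoint. Replacing a subtree
therefore only touches the leaves lying below the position, which are exactly those of `u`. -/

theorem sdiff_sup_sup_of_disjoint {α : Type*} [GeneralizedCoheytingAlgebra α] {a b c d : α}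
    (h : Disjoint b c) : a \ c ⊔ d ⊔ b = (a ⊔ b) \ c ⊔ d := by
  rw [sup_sdiff, h.sdiff_eq_left, sup_right_comm]

theorem List.IsPrefix.eq_of_append_singleton {α : Type*} {s x : List α} {a b : α}
    (ha : s ++ [a] <+: x) (hb : s ++ [b] <+: x) : a = b := by
  simpa using List.prefix_of_prefix_length_le ha hb (by simp)

theorem Valid.lbl_prefix_of_mem_leafLabels {t : PTrie} (hv : Valid t) {x : List Bool}
    (hx : x ∈ leafLabels t) : lbl t <+: x := by
  induction t with
  | leaf s => simp_all [leafLabels, lbl]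
  | node s l r ihl ihr =>
    obtain ⟨hl, hr, hvl, hvr⟩ := hv
    rcases hx with hx | hx
    · exact (List.prefix_append s _).trans (hl.trans (ihl hvl hx))
    · exact (List.prefix_append s _).trans (hr.trans (ihr hvr hx))

theorem Valid.disjoint_leafLabels_node {s : List Bool} {l r : PTrie} (hv : Valid (.node s l r)) :
    Disjoint (leafLabels l) (leafLabels r) := by
  obtain ⟨hl, hr, hvl, hvr⟩ := hv
  refine Set.disjoint_left.2 fun x hxl hxr => ?_
  have := List.IsPrefix.eq_of_append_singleton (hl.trans (hvl.lbl_prefix_of_mem_leafLabels hxl))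
    (hr.trans (hvr.lbl_prefix_of_mem_leafLabels hxr))
  exact Bool.false_ne_true this

theorem leafLabels_subset_of_subtreeAt {t u : PTrie} {π : List Bool}
    (h : subtreeAt t π = some u) : leafLabels u ⊆ leafLabels t := by
  induction π generalizing t with
  | nil => cases h; rfl
  | cons b π ih =>
    cases t with
    | leaf s => cases h
    | node s l r =>
      cases b
      · exact (ih h).trans Set.subset_union_left
      · exact (ih h).trans Set.subset_union_right

/-- Leaf-set accounting for subtree replacement. -/
theorem replaceAt_leafLabels (t u u' : PTrie) (π : List Bool)
    (hv : Valid t) (hsub : subtreeAt t π = some u) :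
    leafLabels (replaceAt t π u') = (leafLabels t \ leafLabels u) ∪ leafLabels u' := by
  induction π generalizing t with
  | nil =>
    cases hsub
    simp [replaceAt]
  | cons b π ih =>
    cases t with
    | leaf s => cases hsub
    | node s l r =>
      have hdisj := hv.disjoint_leafLabels_node
      obtain ⟨-, -, hvl, hvr⟩ := hv
      cases b
      · have hsub : subtreeAt l π = some u := hsub
        change leafLabels (replaceAt l π u') ∪ leafLabels r = _
        rw [ih l hvl hsub]
        exact sdiff_sup_sup_of_disjoint
          (hdisj.symm.mono_right (leafLabels_subset_of_subtreeAt hsub))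
      · have hsub : subtreeAt r π = some u := hsub
        change leafLabels l ∪ leafLabels (replaceAt r π u') = _
        rw [ih r hvr hsub, Set.union_comm, leafLabels, Set.union_comm (leafLabels l)]
        exact sdiff_sup_sup_of_disjoint
          (hdisj.mono_right (leafLabels_subset_of_subtreeAt hsub))
end

section
/- Let `t` be a valid Patricia trie in which every leaf label has length `ℓ`, and let `v : List Bool` with `|v| = ℓ` and `v ∉ leafLabels t`. Then `insert v t` is valid, `lbl (insert v t)` is a prefix of `lbl t`, every leaf label of `insert v t` has length `ℓ`, and `leafLabels (insert v t) = leafLabels t ∪ {v}`. (Sequential correctness of the paper's insert operation: Cases 1–2 of Invariant 1 together with Lemma `successful-ins-lem`.) -/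
/-!
Below every internal node `s` of a valid trie the leaves extend `s ++ [b]`, so when all leaves and
`v` have the same length, every internal label on the search path of `v` is a proper prefix of `v`,
and the descent stops at a subtrie `u` whose label is incomparable with `v`. There `join` is valid,
and its label `lcp (lbl u) v` still extends the `s ++ [b]` required by the parent node.
-/

section Lcp

variable {a b q : List Bool}

lemma lcp_prefix_left : ∀ {a b : List Bool}, lcp a b <+: a
  | [], _ | _ :: _, [] => List.nil_prefix
  | x :: as, y :: bs => by
    unfold lcp
    split_ifs
    · exact List.cons_prefix_cons.mpr ⟨rfl, lcp_prefix_left⟩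
    · exact List.nil_prefix

lemma prefix_lcp (ha : q <+: a) (hb : q <+: b) : q <+: lcp a b := by
  induction q generalizing a b with
  | nil => exact List.nil_prefix
  | cons x qs ih =>
    obtain ⟨as, rfl⟩ := ha
    obtain ⟨bs, rfl⟩ := hb
    simpa [lcp] using ih (List.prefix_append qs as) (List.prefix_append qs bs)

lemma lcp_eq_left_of_prefix (h : a <+: b) : lcp a b = a :=
  lcp_prefix_left.eq_of_length
    (le_antisymm lcp_prefix_left.length_le (prefix_lcp (List.prefix_refl a) h).length_le)

lemma lcp_append_getD_prefix (hab : ¬a <+: b) (hba : ¬b <+: a) :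
    lcp a b ++ [a.getD (lcp a b).length true] <+: a ∧
      lcp a b ++ [!a.getD (lcp a b).length true] <+: b := by
  induction a generalizing b with
  | nil => exact absurd List.nil_prefix hab
  | cons x as ih =>
    cases b with
    | nil => exact absurd List.nil_prefix hba
    | cons y bs =>
      by_cases hxy : x = y
      · subst hxy
        simpa [lcp] using ih (by simpa using hab) (by simpa using hba)
      · have hy : y = !x := by cases x <;> cases y <;> simp_all
        simp [lcp, hy]

lemma append_getD_prefix (h : a <+: b) (hlt : a.length < b.length) (d : Bool) :
    a ++ [b.getD a.length d] <+: b := by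
  obtain ⟨_ | ⟨x, c⟩, rfl⟩ := h
  · simp at hlt
  · simp

end Lcp

lemma lbl_join (t₁ t₂ : PTrie) : lbl (join t₁ t₂) = lcp (lbl t₁) (lbl t₂) := by
  unfold join
  split_ifs <;> rfl

lemma leafLabels_join (t₁ t₂ : PTrie) :
    leafLabels (join t₁ t₂) = leafLabels t₁ ∪ leafLabels t₂ := by
  unfold join
  split_ifs
  · exact Set.union_comm _ _
  · rfl

lemma leafLabels_nonempty : ∀ t : PTrie, (leafLabels t).Nonempty
  | .leaf s => Set.singleton_nonempty s
  | .node _ l _ => (leafLabels_nonempty l).mono Set.subset_union_left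

lemma lbl_insertT (v : List Bool) : ∀ t : PTrie, lbl (insertT v t) = lcp (lbl t) v
  | .leaf s => lbl_join _ _
  | .node s l r => by
    rw [insertT]
    split_ifs with h
    · exact (lcp_eq_left_of_prefix h.1).symm
    · exact (lcp_eq_left_of_prefix h.1).symm
    · exact lbl_join _ _

lemma leafLabels_insertT (v : List Bool) :
    ∀ t : PTrie, leafLabels (insertT v t) = leafLabels t ∪ {v}
  | .leaf s => leafLabels_join _ _
  | .node s l r => by
    rw [insertT]
    split_ifs
    · change leafLabels l ∪ leafLabels (insertT v r) = _
      rw [leafLabels_insertT v r, leafLabels, Set.union_assoc]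
    · change leafLabels (insertT v l) ∪ leafLabels r = _
      rw [leafLabels_insertT v l, leafLabels, Set.union_right_comm]
    · exact leafLabels_join _ _

namespace Valid

lemma join {t₁ t₂ : PTrie} (h₁ : Valid t₁) (h₂ : Valid t₂)
    (h₁₂ : ¬lbl t₁ <+: lbl t₂) (h₂₁ : ¬lbl t₂ <+: lbl t₁) : Valid (join t₁ t₂) := by
  obtain ⟨hp₁, hp₂⟩ := lcp_append_getD_prefix h₁₂ h₂₁
  unfold _root_.join
  cases hx : (lbl t₁).getD (lcp (lbl t₁) (lbl t₂)).length true
  · rw [hx] at hp₁ hp₂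
    exact ⟨hp₁, hp₂, h₁, h₂⟩
  · rw [hx] at hp₁ hp₂
    exact ⟨hp₂, hp₁, h₂, h₁⟩

lemma lbl_prefix_of_mem {t : PTrie} (ht : Valid t) {w : List Bool} (hw : w ∈ leafLabels t) :
    lbl t <+: w := by
  induction t with
  | leaf s => exact (Set.mem_singleton_iff.mp hw).symm ▸ List.prefix_refl s
  | node s l r ihl ihr =>
    obtain ⟨hl, hr, hvl, hvr⟩ := ht
    rcases hw with hw | hw
    · exact (List.prefix_append s [false]).trans (hl.trans (ihl hvl hw))
    · exact (List.prefix_append s [true]).trans (hr.trans (ihr hvr hw))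

lemma length_lt_of_mem {s : List Bool} {l r : PTrie} (ht : Valid (.node s l r))
    {w : List Bool} (hw : w ∈ leafLabels (.node s l r)) : s.length < w.length := by
  obtain ⟨hl, hr, hvl, hvr⟩ := ht
  rcases hw with hw | hw
  · simpa using (hl.trans (hvl.lbl_prefix_of_mem hw)).length_le
  · simpa using (hr.trans (hvr.lbl_prefix_of_mem hw)).length_le

lemma insertT {v : List Bool} {t : PTrie} (ht : Valid t)
    (hlen : ∀ w ∈ leafLabels t, w.length = v.length) (hv : v ∉ leafLabels t) :
    Valid (insertT v t) := by
  induction t with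
  | leaf s =>
    have hne : s ≠ v := fun h => hv (h ▸ rfl)
    have hsv : s.length = v.length := hlen s rfl
    exact Valid.join trivial trivial (fun h => hne (h.eq_of_length hsv))
      (fun h => hne (h.eq_of_length hsv.symm).symm)
  | node s l r ihl ihr =>
    obtain ⟨w, hw⟩ := leafLabels_nonempty (.node s l r)
    have hs : s.length < v.length := hlen w hw ▸ ht.length_lt_of_mem hw
    obtain ⟨hl, hr, hvl, hvr⟩ := ht
    by_cases hsv : s <+: v
    · have hsb := append_getD_prefix hsv hs false
      have hne : s ≠ v := fun h => (h ▸ hs).false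
      rw [_root_.insertT, if_pos ⟨hsv, hne⟩]
      cases hb : v.getD s.length false <;> rw [hb] at hsb <;>
        simp only [Bool.false_eq_true, ↓reduceIte]
      · refine ⟨?_, hr, ihl hvl (fun w hw => hlen w (Or.inl hw)) (fun h => hv (Or.inl h)), hvr⟩
        rw [lbl_insertT]
        exact prefix_lcp hl hsb
      · refine ⟨hl, ?_, hvl, ihr hvr (fun w hw => hlen w (Or.inr hw)) (fun h => hv (Or.inr h))⟩
        rw [lbl_insertT]
        exact prefix_lcp hr hsb
    · rw [_root_.insertT, if_neg fun h => hsv h.1]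
      exact Valid.join ⟨hl, hr, hvl, hvr⟩ trivial hsv fun h => h.length_le.not_gt hs

end Valid

/-- Sequential correctness of the insert operation. -/
theorem insert_correct (t : PTrie) (ℓ : ℕ) (hv : Valid t)
    (hleaf : ∀ s ∈ leafLabels t, s.length = ℓ)
    (v : List Bool) (hvlen : v.length = ℓ) (hnotin : v ∉ leafLabels t) :
    Valid (insertT v t) ∧
    lbl (insertT v t) <+: lbl t ∧
    (∀ s ∈ leafLabels (insertT v t), s.length = ℓ) ∧
    leafLabels (insertT v t) = leafLabels t ∪ {v} := by
  refine ⟨hv.insertT (hvlen ▸ hleaf) hnotin, lbl_insertT v t ▸ lcp_prefix_left, ?_,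
    leafLabels_insertT v t⟩
  rw [leafLabels_insertT]
  rintro s (hs | rfl)
  exacts [hleaf s hs, hvlen]
end
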